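/- arXiv:1305.1363 — 2 statements merged into one kernel-verified Lean document; each statement's English description precedes it below -/
import Mathlib

section
/- For the square loss ℓ(t) = (1-t)², with two instances x₁, x₂ having conditional probabilities ξ₁ = P(y=+1|x₁), ξ₂ = P(y=+1|x₂) and marginal probabilities p₁, p₂ > 0, any minimizer (f₁, f₂) ∈ ℝ² of the expected pairwise risk R(f) = p₁p₂[ξ₁(1-ξ₂)(1-(f₁-f₂))² + ξ₂(1-ξ₁)(1-(f₂-f₁))²] satisfies sign(f₁ - f₂) = sign(ξ₁ - ξ₂) whenever ξ₁ ≠ ξ₂ and ξ₁(1-ξ₂) + ξ₂(1-ξ₁) > 0. -/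
/-!
Writing `a = ξ₁(1-ξ₂)`, `b = ξ₂(1-ξ₁)` and `d = f₁ - f₂`, the risk is `p₁p₂ (a(1-d)² + b(1+d)²)`,
a quadratic in `d` alone. Completing the square,
`(a+b)(a(1-d)² + b(1+d)²) = ((a+b)d - (a-b))² + 4ab`, so for `a + b > 0` its unique minimizer is
`d = (a-b)/(a+b)`, and `a - b = ξ₁ - ξ₂`.
-/

def pairSquareRisk {K : Type*} [CommRing K] (a b d : K) : K :=
  a * (1 - d) ^ 2 + b * (1 + d) ^ 2

theorem mul_pairSquareRisk {K : Type*} [CommRing K] (a b d : K) :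
    (a + b) * pairSquareRisk a b d = ((a + b) * d - (a - b)) ^ 2 + 4 * a * b := by
  unfold pairSquareRisk
  ring

theorem eq_div_of_forall_pairSquareRisk_le {K : Type*} [Field K] [LinearOrder K]
    [IsStrictOrderedRing K] {a b d : K} (hab : 0 < a + b)
    (hmin : ∀ e, pairSquareRisk a b d ≤ pairSquareRisk a b e) :
    d = (a - b) / (a + b) := by
  have hle := mul_le_mul_of_nonneg_left (hmin ((a - b) / (a + b))) hab.le
  rw [mul_pairSquareRisk, mul_pairSquareRisk, mul_div_cancel₀ _ hab.ne', sub_self] at hle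
  have hsq : ((a + b) * d - (a - b)) ^ 2 = 0 := le_antisymm (by nlinarith) (sq_nonneg _)
  rw [eq_div_iff hab.ne']
  linarith [pow_eq_zero_iff two_ne_zero |>.mp hsq]

theorem Real.sign_div_of_pos {x s : ℝ} (hs : 0 < s) : Real.sign (x / s) = Real.sign x := by
  rcases lt_trichotomy x 0 with hx | rfl | hx
  · rw [Real.sign_of_neg hx, Real.sign_of_neg (div_neg_of_neg_of_pos hx hs)]
  · rw [zero_div]
  · rw [Real.sign_of_pos hx, Real.sign_of_pos (div_pos hx hs)]

theorem square_loss_two_point_consistency_general (ξ₁ ξ₂ p₁ p₂ f₁ f₂ : ℝ)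
    (hp₁ : 0 < p₁) (hp₂ : 0 < p₂)
    (R : ℝ → ℝ → ℝ)
    (hR : ∀ g₁ g₂ : ℝ, R g₁ g₂ =
      p₁ * p₂ * (ξ₁ * (1 - ξ₂) * (1 - (g₁ - g₂)) ^ 2 + ξ₂ * (1 - ξ₁) * (1 - (g₂ - g₁)) ^ 2))
    (hmin : ∀ g₁ g₂ : ℝ, R f₁ f₂ ≤ R g₁ g₂)
    (hpos : 0 < ξ₁ * (1 - ξ₂) + ξ₂ * (1 - ξ₁)) :
    Real.sign (f₁ - f₂) = Real.sign (ξ₁ - ξ₂) := by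
  have hR_eq : ∀ g₁ g₂, R g₁ g₂ =
      p₁ * p₂ * pairSquareRisk (ξ₁ * (1 - ξ₂)) (ξ₂ * (1 - ξ₁)) (g₁ - g₂) := by
    intro g₁ g₂
    rw [hR, pairSquareRisk]
    ring
  have hdiff_min : ∀ e, pairSquareRisk (ξ₁ * (1 - ξ₂)) (ξ₂ * (1 - ξ₁)) (f₁ - f₂) ≤
      pairSquareRisk (ξ₁ * (1 - ξ₂)) (ξ₂ * (1 - ξ₁)) e := by
    intro e
    have h := hmin e 0
    rw [hR_eq, hR_eq, sub_zero] at h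
    exact le_of_mul_le_mul_left h (mul_pos hp₁ hp₂)
  rw [eq_div_of_forall_pairSquareRisk_le hpos hdiff_min, Real.sign_div_of_pos hpos]
  congr 1
  ring

/-- AUC consistency of the square loss on a two-point instance space: any minimizer
(f₁, f₂) of the expected pairwise square-loss risk satisfies
sign(f₁ - f₂) = sign(ξ₁ - ξ₂) whenever ξ₁ ≠ ξ₂ and ξ₁(1-ξ₂) + ξ₂(1-ξ₁) > 0. -/
theorem square_loss_two_point_consistency (ξ₁ ξ₂ p₁ p₂ f₁ f₂ : ℝ)
    (h₁ : ξ₁ ∈ Set.Icc (0 : ℝ) 1) (h₂ : ξ₂ ∈ Set.Icc (0 : ℝ) 1)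
    (hp₁ : 0 < p₁) (hp₂ : 0 < p₂)
    (R : ℝ → ℝ → ℝ)
    (hR : ∀ g₁ g₂ : ℝ, R g₁ g₂ =
      p₁ * p₂ * (ξ₁ * (1 - ξ₂) * (1 - (g₁ - g₂)) ^ 2 + ξ₂ * (1 - ξ₁) * (1 - (g₂ - g₁)) ^ 2))
    (hmin : ∀ g₁ g₂ : ℝ, R f₁ f₂ ≤ R g₁ g₂)
    (hne : ξ₁ ≠ ξ₂) (hpos : 0 < ξ₁ * (1 - ξ₂) + ξ₂ * (1 - ξ₁)) :
    Real.sign (f₁ - f₂) = Real.sign (ξ₁ - ξ₂) :=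
  square_loss_two_point_consistency_general ξ₁ ξ₂ p₁ p₂ f₁ f₂ hp₁ hp₂ R hR hmin hpos
end

section
/- Let L₀,…,L_{T-1}: ℝ^d → ℝ be convex, differentiable, nonnegative functions, each with κ-Lipschitz gradient and each attaining minimum value with zero gradient at some point. Generate w₀ = 0 and w_{t+1} = w_t - η∇L_t(w_t) with constant stepsize η ∈ (0, 1/κ). Then for any w* with ‖w*‖ ≤ B, Σ_{t=0}^{T-1} L_t(w_t) - Σ_{t=0}^{T-1} L_t(w*) ≤ (1/(1 - κη)) ( B²/(2η) + κη Σ_{t=0}^{T-1} L_t(w*) ). -/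
/-!
Smoothness bounds `f` above by its quadratic model, and applied to the gradient step of length
`1/κ` together with `f ≥ 0` this yields the self-bounding property `‖∇f‖² ≤ 2κ f`. Expanding
`‖w_{t+1} - w*‖²` and using first-order convexity for the cross term and self-bounding for the
`η²‖∇L_t‖²` term gives `(1 - κη) L_t(w_t) - L_t(w*) ≤ (‖w_t - w*‖² - ‖w_{t+1} - w*‖²) / (2η)`,
which telescopes, and `‖w₀ - w*‖ = ‖w*‖ ≤ B`.
-/

open scoped RealInnerProductSpace

section Gradient

variable {E : Type*} [NormedAddCommGroup E] [InnerProductSpace ℝ E] [CompleteSpace E]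
  {f : E → ℝ}

lemma hasDerivAt_comp_add_smul (hf : Differentiable ℝ f) (x u : E) (s : ℝ) :
    HasDerivAt (fun s : ℝ => f (x + s • u)) ⟪gradient f (x + s • u), u⟫ s := by
  have hline : HasDerivAt (fun s : ℝ => x + s • u) u s := by
    simpa using ((hasDerivAt_id s).smul_const u).const_add x
  have := (hf _).hasGradientAt.hasFDerivAt.comp_hasDerivAt s hline
  rwa [InnerProductSpace.toDual_apply_apply] at this

lemma ConvexOn.add_inner_gradient_le (hconv : ConvexOn ℝ Set.univ f)
    (hf : Differentiable ℝ f) (x y : E) :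
    f x + ⟪gradient f x, y - x⟫ ≤ f y := by
  have hline : ConvexOn ℝ Set.univ (fun s : ℝ => f (x + s • (y - x))) := by
    have := hconv.comp_affineMap (AffineMap.lineMap x y)
    simpa [Function.comp_def, AffineMap.lineMap_apply_module', add_comm] using this
  have := hline.le_slope_of_hasDerivAt (Set.mem_univ 0) (Set.mem_univ 1) one_pos
    (hasDerivAt_comp_add_smul hf x (y - x) 0)
  simp only [slope_def_field, zero_smul, add_zero, one_smul, add_sub_cancel, sub_zero,
    div_one] at this
  linarith

lemma le_add_inner_gradient_add_of_lipschitz_gradient {κ : ℝ} (hf : Differentiable ℝ f)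
    (hlip : ∀ w w' : E, ‖gradient f w - gradient f w'‖ ≤ κ * ‖w - w'‖) (x y : E) :
    f y ≤ f x + ⟪gradient f x, y - x⟫ + κ / 2 * ‖y - x‖ ^ 2 := by
  set u := y - x
  have hbound : ∀ s ∈ Set.Icc (0 : ℝ) 1, f (x + s • u) ≤
      f x + ⟪gradient f x, u⟫ * s + κ / 2 * ‖u‖ ^ 2 * s ^ 2 := by
    refine image_le_of_deriv_right_le_deriv_boundary (f' := fun s => ⟪gradient f (x + s • u), u⟫)
      (B' := fun s => ⟪gradient f x, u⟫ + κ * ‖u‖ ^ 2 * s) ?_ ?_ (by simp) (by fun_prop) ?_ ?_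
    · exact HasDerivAt.continuousOn fun s _ => hasDerivAt_comp_add_smul hf x u s
    · exact fun s _ => (hasDerivAt_comp_add_smul hf x u s).hasDerivWithinAt
    · intro s _
      refine HasDerivAt.hasDerivWithinAt ?_
      have := (((hasDerivAt_id s).const_mul ⟪gradient f x, u⟫).const_add (f x)).add
        ((hasDerivAt_pow 2 s).const_mul (κ / 2 * ‖u‖ ^ 2))
      convert this using 1
      · funext r; simp only [Pi.add_apply, id]
      · push_cast; ring
    · intro s hs
      calc ⟪gradient f (x + s • u), u⟫
          = ⟪gradient f x, u⟫ + ⟪gradient f (x + s • u) - gradient f x, u⟫ := by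
            rw [inner_sub_left]; ring
        _ ≤ ⟪gradient f x, u⟫ + ‖gradient f (x + s • u) - gradient f x‖ * ‖u‖ := by
            gcongr; exact real_inner_le_norm _ _
        _ ≤ ⟪gradient f x, u⟫ + κ * ‖s • u‖ * ‖u‖ := by
            gcongr; simpa using hlip (x + s • u) x
        _ = ⟪gradient f x, u⟫ + κ * ‖u‖ ^ 2 * s := by
            rw [norm_smul, Real.norm_of_nonneg hs.1]; ring
  simpa [u] using hbound 1 (Set.right_mem_Icc.2 zero_le_one)

lemma sq_norm_gradient_le_of_nonneg {κ : ℝ} (hκ : 0 < κ) (hf : Differentiable ℝ f)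
    (hnonneg : ∀ w, 0 ≤ f w)
    (hlip : ∀ w w' : E, ‖gradient f w - gradient f w'‖ ≤ κ * ‖w - w'‖) (x : E) :
    ‖gradient f x‖ ^ 2 ≤ 2 * κ * f x := by
  set g := gradient f x
  have hdescent := le_add_inner_gradient_add_of_lipschitz_gradient hf hlip x (x - κ⁻¹ • g)
  rw [sub_sub_cancel_left, inner_neg_right, norm_neg, real_inner_smul_right,
    real_inner_self_eq_norm_sq, norm_smul, Real.norm_of_nonneg (inv_nonneg.2 hκ.le)] at hdescent
  have hdecrease : f x + -(κ⁻¹ * ‖g‖ ^ 2) + κ / 2 * (κ⁻¹ * ‖g‖) ^ 2 =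
      f x - ‖g‖ ^ 2 / (2 * κ) := by
    field_simp; ring
  have := (hnonneg _).trans (hdescent.trans_eq hdecrease)
  rwa [sub_nonneg, div_le_iff₀ (by positivity), mul_comm] at this

lemma gradient_step_loss_le {κ η : ℝ} (hκ : 0 < κ) (hη : 0 < η) (hconv : ConvexOn ℝ Set.univ f)
    (hf : Differentiable ℝ f) (hnonneg : ∀ w, 0 ≤ f w)
    (hlip : ∀ w w' : E, ‖gradient f w - gradient f w'‖ ≤ κ * ‖w - w'‖) (w wstar : E) :
    (1 - κ * η) * f w - f wstar ≤
      (‖w - wstar‖ ^ 2 - ‖w - η • gradient f w - wstar‖ ^ 2) / (2 * η) := by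
  set g := gradient f w
  have hexpand : ‖w - η • g - wstar‖ ^ 2 =
      ‖w - wstar‖ ^ 2 - 2 * η * ⟪g, w - wstar⟫ + η ^ 2 * ‖g‖ ^ 2 := by
    rw [sub_right_comm, norm_sub_sq_real, real_inner_smul_right, norm_smul, Real.norm_eq_abs,
      mul_pow, sq_abs, real_inner_comm]
    ring
  have hfirst := hconv.add_inner_gradient_le hf w wstar
  rw [← neg_sub, inner_neg_right] at hfirst
  have hself := sq_norm_gradient_le_of_nonneg hκ hf hnonneg hlip w
  rw [le_div_iff₀ (by positivity), hexpand]
  nlinarith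

end Gradient

theorem ogd_regret_bound_general {d T : ℕ}
    (L : Fin T → EuclideanSpace ℝ (Fin d) → ℝ) (κ : ℝ) (hκ : 0 < κ)
    (hconv : ∀ t, ConvexOn ℝ Set.univ (L t)) (hdiff : ∀ t, Differentiable ℝ (L t))
    (hnonneg : ∀ t w, 0 ≤ L t w)
    (hlip : ∀ t, ∀ w w' : EuclideanSpace ℝ (Fin d),
      ‖gradient (L t) w - gradient (L t) w'‖ ≤ κ * ‖w - w'‖)
    (η : ℝ) (hη : η ∈ Set.Ioo 0 (1 / κ))
    (w : ℕ → EuclideanSpace ℝ (Fin d)) (hw0 : w 0 = 0)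
    (hupd : ∀ t : Fin T, w (t + 1) = w t - η • gradient (L t) (w t))
    (wstar : EuclideanSpace ℝ (Fin d)) (B : ℝ) (hB : ‖wstar‖ ≤ B) :
    ∑ t : Fin T, L t (w t) - ∑ t : Fin T, L t wstar ≤
      (1 / (1 - κ * η)) * (B ^ 2 / (2 * η) + κ * η * ∑ t : Fin T, L t wstar) := by
  obtain ⟨hη0, hηκ⟩ := hη
  have hκη : 0 < 1 - κ * η := by
    linarith [(lt_div_iff₀ hκ).1 hηκ]
  set dist2 : ℕ → ℝ := fun n => ‖w n - wstar‖ ^ 2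
  have hsum : (1 - κ * η) * ∑ t : Fin T, L t (w t) - ∑ t : Fin T, L t wstar ≤
      (dist2 0 - dist2 T) / (2 * η) := by
    rw [Finset.mul_sum, ← Finset.sum_sub_distrib, ← Finset.sum_range_sub',
      ← Fin.sum_univ_eq_sum_range, Finset.sum_div]
    refine Finset.sum_le_sum fun t _ => ?_
    simpa only [dist2, hupd t] using
      gradient_step_loss_le hκ hη0 (hconv t) (hdiff t) (hnonneg t) (hlip t) (w t) wstar
  have hstart : dist2 0 ≤ B ^ 2 := by
    simpa only [dist2, hw0, zero_sub, norm_neg] using pow_le_pow_left₀ (norm_nonneg _) hB 2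
  have hend : 0 ≤ dist2 T := sq_nonneg _
  rw [one_div_mul_eq_div, le_div_iff₀ hκη]
  have : (dist2 0 - dist2 T) / (2 * η) ≤ B ^ 2 / (2 * η) := by gcongr; linarith
  linarith

/-- Regret bound for online gradient descent with constant stepsize η ∈ (0, 1/κ) on
convex, differentiable, nonnegative losses with κ-Lipschitz gradients, each attaining
its minimum with zero gradient. -/
theorem ogd_regret_bound {d T : ℕ}
    (L : Fin T → EuclideanSpace ℝ (Fin d) → ℝ) (κ : ℝ) (hκ : 0 < κ)
    (hconv : ∀ t, ConvexOn ℝ Set.univ (L t)) (hdiff : ∀ t, Differentiable ℝ (L t))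
    (hnonneg : ∀ t w, 0 ≤ L t w)
    (hlip : ∀ t, ∀ w w' : EuclideanSpace ℝ (Fin d),
      ‖gradient (L t) w - gradient (L t) w'‖ ≤ κ * ‖w - w'‖)
    (hattain : ∀ t, ∃ z : EuclideanSpace ℝ (Fin d),
      gradient (L t) z = 0 ∧ ∀ w, L t z ≤ L t w)
    (η : ℝ) (hη : η ∈ Set.Ioo 0 (1 / κ))
    (w : ℕ → EuclideanSpace ℝ (Fin d)) (hw0 : w 0 = 0)
    (hupd : ∀ t : Fin T, w (t + 1) = w t - η • gradient (L t) (w t))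
    (wstar : EuclideanSpace ℝ (Fin d)) (B : ℝ) (hB : ‖wstar‖ ≤ B) :
    ∑ t : Fin T, L t (w t) - ∑ t : Fin T, L t wstar ≤
      (1 / (1 - κ * η)) * (B ^ 2 / (2 * η) + κ * η * ∑ t : Fin T, L t wstar) :=
  ogd_regret_bound_general L κ hκ hconv hdiff hnonneg hlip η hη w hw0 hupd wstar B hB
end
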